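/- Let V be a finite vertex set, let I be a set of edges on V, let M_1, …, M_t ⊆ I be matchings such that for every j ∈ {1, …, t}, M_j is a maximal matching of the graph (V, I \ (M_1 ∪ … ∪ M_{j-1})). Let D ⊆ I, let ε ∈ (0, 1], and suppose that |M_1| + … + |M_t| ≥ |V|/2 + |D|/ε. Then the graph (V, (M_1 ∪ … ∪ M_t) \ D) contains a matching M' with 2·|M'| ≥ (1 − ε)·ν(G), where G = (V, I \ D) and ν(G) denotes the maximum size of a matching in G. -/

import Mathlib

/-!
Fix a maximum matching `N` of `I \ D` and let `W` be the surviving hierarchy edges. An edge of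
`N` outside the hierarchy was rejected at every level `j`, so it meets an edge of `M j`, and an
edge of `M j` meets at most two edges of `N`. The edges of `M j \ D` meeting two of them have both
endpoints on edges of `N` outside the hierarchy, so together with `N ∩ W` they form a matching in
`W`; counting then gives `|N| ≤ 2 ν(W) + 2 |M j ∩ D|` at every level. Summing over the disjoint
levels gives `t |N| ≤ 2 t ν(W) + 2 |D|`, while `∑ |M j| ≤ t ν(W) + |D|` and the size hypothesis
give `(1 - ε) |D| ≤ ε t ν(W)`, which absorbs the error term.
-/

/-- A matching: a set of non-loop edges that pairwise share no endpoint. -/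
def IsMatching {V : Type} (M : Finset (Sym2 V)) : Prop :=
  (∀ e ∈ M, ¬ e.IsDiag) ∧ ∀ e ∈ M, ∀ f ∈ M, e ≠ f → ∀ v : V, ¬ (v ∈ e ∧ v ∈ f)

/-- A maximal matching of the graph with edge set `E`. -/
def IsMaximalMatching {V : Type} [DecidableEq V] (E M : Finset (Sym2 V)) : Prop :=
  IsMatching M ∧ M ⊆ E ∧ ∀ e ∈ E, IsMatching (insert e M) → e ∈ M

/-- `ν(G)`: the maximum size of a matching in the graph with edge set `E`. -/
noncomputable def matchingNumber {V : Type} (E : Finset (Sym2 V)) : ℕ :=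
  sSup {k | ∃ M : Finset (Sym2 V), IsMatching M ∧ M ⊆ E ∧ M.card = k}

open Finset

variable {V : Type}

namespace IsMatching

variable {N A B : Finset (Sym2 V)}

theorem empty : IsMatching (∅ : Finset (Sym2 V)) := by
  simp [IsMatching]

theorem mono (hB : IsMatching B) (h : A ⊆ B) : IsMatching A :=
  ⟨fun e he => hB.1 e (h he), fun e he f hf => hB.2 e (h he) f (h hf)⟩

theorem eq_of_mem_of_mem (hN : IsMatching N) {e f : Sym2 V} {v : V} (he : e ∈ N) (hf : f ∈ N)
    (hve : v ∈ e) (hvf : v ∈ f) : e = f :=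
  by_contra fun hne => hN.2 e he f hf hne v ⟨hve, hvf⟩

theorem union [DecidableEq V] (hA : IsMatching A) (hB : IsMatching B)
    (hAB : ∀ a ∈ A, ∀ b ∈ B, ∀ v ∈ a, v ∉ b) : IsMatching (A ∪ B) := by
  refine ⟨fun e he => (mem_union.mp he).elim (hA.1 e) (hB.1 e), ?_⟩
  rintro a ha b hb hab v ⟨hva, hvb⟩
  rcases mem_union.mp ha with ha | ha <;> rcases mem_union.mp hb with hb | hb
  · exact hA.2 a ha b hb hab v ⟨hva, hvb⟩
  · exact hAB a ha b hb v hva hvb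
  · exact hAB b hb a ha v hvb hva
  · exact hB.2 a ha b hb hab v ⟨hva, hvb⟩

/-- A matching has at most one edge at each endpoint of `f`. -/
theorem card_le_two_of_forall_meets (hN : IsMatching N) (f : Sym2 V)
    (hmeets : ∀ e ∈ N, ∃ v ∈ e, v ∈ f) : N.card ≤ 2 := by
  induction f using Sym2.ind with
  | _ x y =>
    classical
    have hmem : ∀ e ∈ N, (if x ∈ e then x else y) ∈ e := fun e he => by
      obtain ⟨v, hve, hvf⟩ := hmeets e he
      split_ifs with hx
      · exact hx
      · rcases Sym2.mem_iff.mp hvf with rfl | rfl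
        exacts [absurd hve hx, hve]
    calc N.card ≤ ({x, y} : Finset V).card :=
          card_le_card_of_injOn (fun e => if x ∈ e then x else y)
            (fun e _ => by dsimp only; split_ifs <;> simp)
            (fun e he g hg (h : ite _ _ _ = ite _ _ _) =>
              hN.eq_of_mem_of_mem he hg (hmem e he) (h ▸ hmem g hg))
      _ ≤ 2 := card_le_two

theorem forall_notMem_of_meets_two (hN : IsMatching N) {e₁ e₂ g f : Sym2 V}
    (h₁ : e₁ ∈ N) (h₂ : e₂ ∈ N) (hg : g ∈ N) (h₁₂ : e₁ ≠ e₂) (hg₁ : g ≠ e₁) (hg₂ : g ≠ e₂)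
    (hf₁ : ∃ v ∈ e₁, v ∈ f) (hf₂ : ∃ v ∈ e₂, v ∈ f) : ∀ v ∈ f, v ∉ g := by
  obtain ⟨v₁, hv₁, hv₁f⟩ := hf₁
  obtain ⟨v₂, hv₂, hv₂f⟩ := hf₂
  have hv : v₁ ≠ v₂ := fun h => h₁₂ (hN.eq_of_mem_of_mem h₁ h₂ hv₁ (h ▸ hv₂))
  rw [(Sym2.mem_and_mem_iff hv).mp ⟨hv₁f, hv₂f⟩]
  rintro v hv hvg
  rcases Sym2.mem_iff.mp hv with rfl | rfl
  · exact hg₁ (hN.eq_of_mem_of_mem hg h₁ hvg hv₁)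
  · exact hg₂ (hN.eq_of_mem_of_mem hg h₂ hvg hv₂)

end IsMatching

theorem Sym2.disjoint_of_forall_notMem {A B : Finset (Sym2 V)}
    (hAB : ∀ a ∈ A, ∀ b ∈ B, ∀ v ∈ a, v ∉ b) : Disjoint A B :=
  disjoint_left.mpr fun e hA hB => hAB e hA e hB _ e.out_fst_mem e.out_fst_mem

theorem bddAbove_setOf_isMatching_card (E : Finset (Sym2 V)) :
    BddAbove {k | ∃ M : Finset (Sym2 V), IsMatching M ∧ M ⊆ E ∧ M.card = k} :=
  ⟨E.card, by rintro _ ⟨M, -, hME, rfl⟩; exact card_le_card hME⟩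

theorem IsMatching.card_le_matchingNumber {E M : Finset (Sym2 V)} (hM : IsMatching M)
    (hME : M ⊆ E) : M.card ≤ matchingNumber E :=
  le_csSup (bddAbove_setOf_isMatching_card E) ⟨M, hM, hME, rfl⟩

theorem exists_isMatching_card_eq_matchingNumber (E : Finset (Sym2 V)) :
    ∃ M ⊆ E, IsMatching M ∧ M.card = matchingNumber E := by
  obtain ⟨M, hM, hME, hcard⟩ := Nat.sSup_mem
    (s := {k | ∃ M : Finset (Sym2 V), IsMatching M ∧ M ⊆ E ∧ M.card = k})
    ⟨0, ∅, IsMatching.empty, E.empty_subset, rfl⟩ (bddAbove_setOf_isMatching_card E)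
  exact ⟨M, hME, hM, hcard⟩

theorem IsMaximalMatching.exists_meets [DecidableEq V] {E M : Finset (Sym2 V)} {e : Sym2 V}
    (hM : IsMaximalMatching E M) (he : e ∈ E) (heM : e ∉ M) (hdiag : ¬ e.IsDiag) :
    ∃ f ∈ M, ∃ v ∈ e, v ∈ f := by
  by_contra! hfree
  refine heM (hM.2.2 e he ⟨?_, ?_⟩)
  · intro g hg
    rcases mem_insert.mp hg with rfl | hg
    exacts [hdiag, hM.1.1 g hg]
  · rintro a ha b hb hab v ⟨hva, hvb⟩
    rcases mem_insert.mp ha with rfl | haM <;>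
      rcases mem_insert.mp hb with rfl | hbM
    · exact hab rfl
    · exact hfree b hbM v hva hvb
    · exact hfree a haM v hvb hva
    · exact hM.1.2 a haM b hbM hab v ⟨hva, hvb⟩

theorem IsMatching.card_le_two_mul_matchingNumber_add [DecidableEq V]
    {N M W D : Finset (Sym2 V)} (hN : IsMatching N) (hM : IsMatching M) (hMW : M \ D ⊆ W)
    (hblock : ∀ e ∈ N \ W, ∃ f ∈ M, ∃ v ∈ e, v ∈ f) :
    N.card ≤ 2 * matchingNumber W + 2 * (M ∩ D).card := by
  classical
  set R := N \ W
  set c : Sym2 V → ℕ := fun f => {e ∈ R | ∃ v ∈ e, v ∈ f}.card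
  set T := {f ∈ M \ D | 2 ≤ c f}
  have hR : R.card ≤ ∑ f ∈ M, c f :=
    (card_le_card fun e he => by
      obtain ⟨f, hf, hmeets⟩ := hblock e he
      exact mem_biUnion.mpr ⟨f, hf, mem_filter.mpr ⟨he, hmeets⟩⟩).trans
      card_biUnion_le
  have hc : ∀ f, c f ≤ 2 := fun f =>
    ((hN.mono sdiff_subset).mono (filter_subset _ _)).card_le_two_of_forall_meets f
      fun e he => (mem_filter.mp he).2
  have hsum_inter : ∑ f ∈ M ∩ D, c f ≤ 2 * (M ∩ D).card := by
    simpa [mul_comm] using sum_le_card_nsmul _ _ 2 fun f _ => hc f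
  have hsum_sdiff : ∑ f ∈ M \ D, c f ≤ (M \ D).card + T.card := by
    rw [card_filter, card_eq_sum_ones, ← sum_add_distrib]
    refine sum_le_sum fun f _ => ?_
    have := hc f
    split_ifs <;> omega
  -- An edge of `T` has both endpoints on edges of `R`, so it avoids every edge of `N ∩ W`.
  have hTQ : T.card + (N ∩ W).card ≤ matchingNumber W := by
    have hfar : ∀ f ∈ T, ∀ g ∈ N ∩ W, ∀ v ∈ f, v ∉ g := by
      intro f hf g hg
      obtain ⟨e₁, h₁, e₂, h₂, h₁₂⟩ := one_lt_card.mp (mem_filter.mp hf).2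
      rw [mem_filter] at h₁ h₂
      have hgR : ∀ e ∈ R, g ≠ e := fun e he hge =>
        (mem_sdiff.mp he).2 (hge ▸ (mem_inter.mp hg).2)
      exact hN.forall_notMem_of_meets_two (sdiff_subset h₁.1) (sdiff_subset h₂.1)
        (inter_subset_left hg) h₁₂ (hgR _ h₁.1) (hgR _ h₂.1) h₁.2 h₂.2
    have hTW : T ⊆ W := (filter_subset _ _).trans hMW
    rw [← card_union_of_disjoint (Sym2.disjoint_of_forall_notMem hfar)]
    exact ((hM.mono ((filter_subset _ _).trans sdiff_subset)).union
      (hN.mono inter_subset_left) hfar).card_le_matchingNumber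
      (union_subset hTW inter_subset_right)
  have hMD : (M \ D).card ≤ matchingNumber W :=
    (hM.mono sdiff_subset).card_le_matchingNumber hMW
  have hsplit_sum := sum_inter_add_sum_sdiff M D c
  have hsplit_card : R.card + (N ∩ W).card = N.card := card_sdiff_add_card_inter N W
  omega

section Hierarchy

variable [DecidableEq V] {ι : Type*} [LinearOrder ι] [LocallyFiniteOrderBot ι]

def IsHierarchicalMatching (I : Finset (Sym2 V)) (M : ι → Finset (Sym2 V)) : Prop :=
  ∀ j, IsMaximalMatching (I \ (Iio j).biUnion M) (M j)

namespace IsHierarchicalMatching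

variable {I : Finset (Sym2 V)} {M : ι → Finset (Sym2 V)}

theorem pairwise_disjoint (hM : IsHierarchicalMatching I M) :
    Pairwise (Function.onFun Disjoint M) :=
  pairwise_disjoint_on M |>.mpr fun i j hij => disjoint_left.mpr fun _ hi hj =>
    (mem_sdiff.mp ((hM j).2.1 hj)).2 (mem_biUnion.mpr ⟨i, mem_Iio.mpr hij, hi⟩)

theorem exists_meets (hM : IsHierarchicalMatching I M) {e : Sym2 V} (he : e ∈ I)
    (heM : ∀ i, e ∉ M i) (hdiag : ¬ e.IsDiag) (j : ι) : ∃ f ∈ M j, ∃ v ∈ e, v ∈ f := by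
  refine (hM j).exists_meets (mem_sdiff.mpr ⟨he, fun h => ?_⟩) (heM j) hdiag
  obtain ⟨i, -, hi⟩ := mem_biUnion.mp h
  exact heM i hi

variable [Fintype ι]

theorem sum_card_inter_le (hM : IsHierarchicalMatching I M) (D : Finset (Sym2 V)) :
    ∑ j, (M j ∩ D).card ≤ D.card := by
  rw [← card_biUnion fun i _ j _ hij =>
    (hM.pairwise_disjoint hij).mono inter_subset_left inter_subset_left]
  exact card_le_card (biUnion_subset.mpr fun _ _ => inter_subset_right)

theorem sum_card_le (hM : IsHierarchicalMatching I M) (D : Finset (Sym2 V)) :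
    ∑ j, (M j).card ≤ Fintype.card ι * matchingNumber (univ.biUnion M \ D) + D.card := by
  have hlevel : ∀ j, (M j \ D).card ≤ matchingNumber (univ.biUnion M \ D) := fun j =>
    ((hM j).1.mono sdiff_subset).card_le_matchingNumber
      (sdiff_subset_sdiff (subset_biUnion_of_mem M (mem_univ j)) le_rfl)
  calc ∑ j, (M j).card = ∑ j, (M j \ D).card + ∑ j, (M j ∩ D).card := by
        simp only [← sum_add_distrib, card_sdiff_add_card_inter]
    _ ≤ Fintype.card ι * matchingNumber (univ.biUnion M \ D) + D.card := by
        gcongr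
        · exact (sum_le_card_nsmul _ _ _ fun j _ => hlevel j).trans_eq
            (by rw [card_univ, smul_eq_mul])
        · exact hM.sum_card_inter_le D

theorem card_mul_card_le (hM : IsHierarchicalMatching I M) {N D : Finset (Sym2 V)}
    (hN : IsMatching N) (hND : N ⊆ I \ D) :
    Fintype.card ι * N.card ≤
      2 * (Fintype.card ι * matchingNumber (univ.biUnion M \ D)) + 2 * D.card := by
  have hlevel : ∀ j, N.card ≤ 2 * matchingNumber (univ.biUnion M \ D) + 2 * (M j ∩ D).card :=
    fun j => hN.card_le_two_mul_matchingNumber_add (hM j).1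
      (sdiff_subset_sdiff (subset_biUnion_of_mem M (mem_univ j)) le_rfl)
      fun e he => by
        obtain ⟨heID, heW⟩ := mem_sdiff.mp he
        obtain ⟨heI, heD⟩ := mem_sdiff.mp (hND heID)
        refine hM.exists_meets heI (fun i hi => heW ?_) (hN.1 e heID) j
        exact mem_sdiff.mpr ⟨mem_biUnion.mpr ⟨i, mem_univ i, hi⟩, heD⟩
  calc Fintype.card ι * N.card = ∑ j : ι, N.card := by simp
    _ ≤ ∑ j, (2 * matchingNumber (univ.biUnion M \ D) + 2 * (M j ∩ D).card) :=
        sum_le_sum fun j _ => hlevel j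
    _ ≤ _ := by
        rw [sum_add_distrib, sum_const, ← mul_sum, card_univ,
          smul_eq_mul]
        linarith [hM.sum_card_inter_le D]

end IsHierarchicalMatching

end Hierarchy

theorem stmt13_general {V : Type} [Fintype V] [DecidableEq V]
    (I D : Finset (Sym2 V))
    (t : ℕ) (M : Fin t → Finset (Sym2 V))
    (hHier : ∀ j : Fin t, IsMaximalMatching (I \ (Finset.Iio j).biUnion M) (M j))
    (ε : ℝ) (hε0 : 0 < ε) (hε1 : ε ≤ 1)
    (hsize : (Fintype.card V : ℝ) / 2 + (D.card : ℝ) / ε ≤ ∑ j, ((M j).card : ℝ)) :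
    ∃ M' ⊆ Finset.univ.biUnion M \ D, IsMatching M' ∧
      (1 - ε) * (matchingNumber (I \ D) : ℝ) ≤ 2 * (M'.card : ℝ) := by
  have hM : IsHierarchicalMatching I M := hHier
  obtain ⟨Y, hYW, hY, hYcard⟩ := exists_isMatching_card_eq_matchingNumber (univ.biUnion M \ D)
  obtain ⟨N, hNI, hN, hNcard⟩ := exists_isMatching_card_eq_matchingNumber (I \ D)
  refine ⟨Y, hYW, hY, ?_⟩
  rw [← hNcard, hYcard]
  set ν := matchingNumber (univ.biUnion M \ D)
  have hcount : (t * N.card : ℝ) ≤ 2 * (t * ν) + 2 * D.card := by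
    exact_mod_cast Fintype.card_fin t ▸ hM.card_mul_card_le hN hNI
  have hsum : ∑ j, ((M j).card : ℝ) ≤ t * ν + D.card := by
    exact_mod_cast Fintype.card_fin t ▸ hM.sum_card_le D
  have hDε : (0 : ℝ) ≤ D.card / ε := by positivity
  rcases Nat.eq_zero_or_pos t with rfl | ht
  · simp only [univ_eq_empty, sum_empty] at hsize
    have hV : (Fintype.card V : ℝ) = 0 := by
      linarith [hDε, (by positivity : (0 : ℝ) ≤ Fintype.card V)]
    have : IsEmpty V := Fintype.card_eq_zero_iff.mp (by exact_mod_cast hV)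
    simp [eq_empty_of_isEmpty N]
  · have hD : D.card * (1 - ε) ≤ ε * (t * ν) := by
      have hV : (0 : ℝ) ≤ Fintype.card V / 2 := by positivity
      have := (div_le_iff₀ hε0).mp (by linarith : (D.card : ℝ) / ε ≤ t * ν + D.card)
      linarith
    have : (t : ℝ) * ((1 - ε) * N.card) ≤ t * (2 * ν) := by
      nlinarith [mul_le_mul_of_nonneg_left hcount (sub_nonneg.mpr hε1)]
    exact le_of_mul_le_mul_left this (by exact_mod_cast ht)

/-- Combinatorial core of the paper's Theorem 1.4: a hierarchical maximal matching
structure `M 0, …, M (t-1)` on the inserted edges `I` of total size at least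
`|V|/2 + |D|/ε` retains, after the deletions `D` are applied, a matching `M'` with
`2·|M'| ≥ (1 - ε)·ν(G)` where `G = (V, I \ D)`. -/
theorem stmt13 {V : Type} [Fintype V] [DecidableEq V]
    (I D : Finset (Sym2 V)) (hIloop : ∀ e ∈ I, ¬ e.IsDiag) (hDI : D ⊆ I)
    (t : ℕ) (M : Fin t → Finset (Sym2 V)) (hMI : ∀ j, M j ⊆ I)
    (hHier : ∀ j : Fin t, IsMaximalMatching (I \ (Finset.Iio j).biUnion M) (M j))
    (ε : ℝ) (hε0 : 0 < ε) (hε1 : ε ≤ 1)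
    (hsize : (Fintype.card V : ℝ) / 2 + (D.card : ℝ) / ε ≤ ∑ j, ((M j).card : ℝ)) :
    ∃ M' ⊆ Finset.univ.biUnion M \ D, IsMatching M' ∧
      (1 - ε) * (matchingNumber (I \ D) : ℝ) ≤ 2 * (M'.card : ℝ) :=
  stmt13_general I D t M hHier ε hε0 hε1 hsize
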